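/- Fix a real α with 0 < α < 1 and define F(τ) = ((1−α)/α) · τ^{(1/α)−1} · ∫_τ^∞ z^{−1/α} e^{−z} dz for τ > 0. Let ε > 0 and set y = (1−α)/(α·ε). Assume y > 1, log y + ⌊1/α⌋ > 2, and y⁶·log y > 1. Then every τ > 0 with F(τ) = ε satisfies log y − log(log y) − ⌈1/α⌉ < τ < log y. -/

import Mathlib

/-!
With `p = 1/α`, `F(τ) = (p - 1) E_p(τ)` for the generalized exponential integral `E_p`, so
`F(τ) = ε` says `y E_p(τ) = 1`. Integrating the exact derivative of `z ^ (1 - p) e^{-z}` gives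
`(τ + p - 1) E_p(τ) ≤ e^{-τ}`, so `τ + p - 1 ≤ y e^{-τ}`, which fails once `τ ≥ log y`.
Truncating the integral at `τ (1 + u)` gives `u e^{-τ} ≤ (1 + u)^p (1 + τ u) E_p(τ)`; with
`u = 1/(⌈p⌉ - 1)` this reads `y e^{-τ} ≤ 2e (⌈p⌉ - 1 + τ)`, while
`τ ≤ log y - log log y - ⌈p⌉` would force `y e^{-τ} ≥ e^{⌈p⌉} log y`, too large.
-/

open MeasureTheory Set Real Filter Topology

lemma integrableOn_rpow_mul_exp_neg_Ioi (a : ℝ) {τ : ℝ} (hτ : 0 < τ) :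
    IntegrableOn (fun z : ℝ => z ^ a * exp (-z)) (Ioi τ) := by
  refine integrable_of_isBigO_exp_neg one_half_pos ?_ ?_
  · exact fun z hz => ((continuousAt_rpow_const z a (.inl (hτ.trans_le hz).ne')).mul
      (continuous_exp.comp continuous_neg).continuousAt).continuousWithinAt
  · simpa only [mul_comm, neg_div] using (Gamma_integrand_isLittleO a).isBigO

lemma rpow_one_sub_eq_rpow_neg_mul {z : ℝ} (hz : 0 < z) (p : ℝ) :
    z ^ (1 - p) = z ^ (-p) * z := by
  rw [show 1 - p = -p + 1 by ring, rpow_add_one hz.ne']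

lemma integrableOn_add_sub_one_mul_rpow_neg_mul_exp_neg (p : ℝ) {τ : ℝ} (hτ : 0 < τ) :
    IntegrableOn (fun z => (z + p - 1) * (z ^ (-p) * exp (-z))) (Ioi τ) := by
  refine ((integrableOn_rpow_mul_exp_neg_Ioi (1 - p) hτ).add
    ((integrableOn_rpow_mul_exp_neg_Ioi (-p) hτ).const_mul (p - 1))).congr_fun
      (fun z hz => ?_) measurableSet_Ioi
  rw [Pi.add_apply, rpow_one_sub_eq_rpow_neg_mul (hτ.trans hz)]
  ring

/-- The integrand is `-(d/dz) (z ^ (1 - p) * exp (-z))`. -/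
lemma integral_Ioi_add_sub_one_mul_rpow_neg_mul_exp_neg (p : ℝ) {τ : ℝ} (hτ : 0 < τ) :
    ∫ z in Ioi τ, (z + p - 1) * (z ^ (-p) * exp (-z)) = τ ^ (1 - p) * exp (-τ) := by
  have hderiv : ∀ z ∈ Ici τ, HasDerivAt (fun z => -(z ^ (1 - p) * exp (-z)))
      ((z + p - 1) * (z ^ (-p) * exp (-z))) z := by
    intro z hz
    have hz0 : 0 < z := hτ.trans_le hz
    refine ((hasDerivAt_rpow_const (p := 1 - p) (.inl hz0.ne')).mul
      (hasDerivAt_neg z).exp).neg.congr_deriv ?_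
    rw [show 1 - p - 1 = -p by ring, rpow_one_sub_eq_rpow_neg_mul hz0]
    ring
  have hlim : Tendsto (fun z => -(z ^ (1 - p) * exp (-z))) atTop (𝓝 0) := by
    simpa using (tendsto_rpow_mul_exp_neg_mul_atTop_nhds_zero (1 - p) 1 one_pos).neg
  rw [integral_Ioi_of_hasDerivAt_of_tendsto' hderiv
    (integrableOn_add_sub_one_mul_rpow_neg_mul_exp_neg p hτ) hlim]
  ring

/-- The generalized exponential integral `E_p(τ)`; the substitution `z = τ t` turns it into the
usual `∫₁^∞ t ^ (-p) * exp (-τ t) dt`. -/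
noncomputable def expIntegralE (p τ : ℝ) : ℝ :=
  τ ^ (p - 1) * ∫ z in Ioi τ, z ^ (-p) * exp (-z)

lemma add_sub_one_mul_expIntegralE_le (p : ℝ) {τ : ℝ} (hτ : 0 < τ) :
    (τ + p - 1) * expIntegralE p τ ≤ exp (-τ) := by
  have hint := integrableOn_rpow_mul_exp_neg_Ioi (-p) hτ
  have hmono : (τ + p - 1) * ∫ z in Ioi τ, z ^ (-p) * exp (-z) ≤ τ ^ (1 - p) * exp (-τ) := by
    rw [← integral_Ioi_add_sub_one_mul_rpow_neg_mul_exp_neg p hτ, ← integral_const_mul]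
    refine setIntegral_mono_on (hint.const_mul _)
      (integrableOn_add_sub_one_mul_rpow_neg_mul_exp_neg p hτ) measurableSet_Ioi fun z hz => ?_
    have : 0 ≤ z ^ (-p) * exp (-z) := by have := (hτ.trans hz).le; positivity
    exact mul_le_mul_of_nonneg_right (by linarith [hz.out]) this
  calc (τ + p - 1) * expIntegralE p τ
      = τ ^ (p - 1) * ((τ + p - 1) * ∫ z in Ioi τ, z ^ (-p) * exp (-z)) := by
        rw [expIntegralE]; ring
    _ ≤ τ ^ (p - 1) * (τ ^ (1 - p) * exp (-τ)) := by gcongr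
    _ = exp (-τ) := by
        rw [← mul_assoc, ← rpow_add hτ, show p - 1 + (1 - p) = 0 by ring, rpow_zero, one_mul]

lemma integral_Ioc_exp_neg {a b : ℝ} (hab : a ≤ b) :
    ∫ z in Ioc a b, exp (-z) = exp (-a) - exp (-b) := by
  rw [← intervalIntegral.integral_of_le hab, intervalIntegral.integral_comp_neg (fun z => exp z),
    integral_exp]

lemma rpow_neg_mul_sub_exp_neg_le_integral {p τ T : ℝ} (hp : 0 ≤ p) (hτ : 0 < τ) (hT : τ ≤ T) :
    T ^ (-p) * (exp (-τ) - exp (-T)) ≤ ∫ z in Ioi τ, z ^ (-p) * exp (-z) := by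
  have hint := integrableOn_rpow_mul_exp_neg_Ioi (-p) hτ
  calc T ^ (-p) * (exp (-τ) - exp (-T)) = ∫ z in Ioc τ T, T ^ (-p) * exp (-z) := by
        rw [integral_const_mul, integral_Ioc_exp_neg hT]
    _ ≤ ∫ z in Ioc τ T, z ^ (-p) * exp (-z) := by
        refine setIntegral_mono_on ?_ (hint.mono_set Ioc_subset_Ioi_self) measurableSet_Ioc
          fun z hz => ?_
        · exact (continuous_const.mul (continuous_exp.comp continuous_neg)).integrableOn_Ioc
        · exact mul_le_mul_of_nonneg_right
            (rpow_le_rpow_of_nonpos (hτ.trans hz.1) hz.2 (neg_nonpos.2 hp)) (exp_pos _).le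
    _ ≤ ∫ z in Ioi τ, z ^ (-p) * exp (-z) := by
        refine setIntegral_mono_set hint ?_ Ioc_subset_Ioi_self.eventuallyLE
        filter_upwards [ae_restrict_mem measurableSet_Ioi] with z hz
        have := (hτ.trans hz).le
        positivity

lemma div_one_add_le_one_sub_exp_neg {v : ℝ} (hv : 0 ≤ v) : v / (1 + v) ≤ 1 - exp (-v) := by
  have h := add_one_le_exp v
  rw [div_le_iff₀ (by positivity), exp_neg]
  have := exp_pos v
  field_simp
  nlinarith

lemma mul_exp_neg_le_expIntegralE {p τ u : ℝ} (hp : 0 ≤ p) (hτ : 0 < τ) (hu : 0 < u) :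
    u * exp (-τ) ≤ (1 + u) ^ p * (1 + τ * u) * expIntegralE p τ := by
  have hT : τ ≤ τ * (1 + u) := by nlinarith
  have hI := rpow_neg_mul_sub_exp_neg_le_integral hp hτ hT
  have hexp : exp (-τ) - exp (-(τ * (1 + u))) = exp (-τ) * (1 - exp (-(τ * u))) := by
    rw [mul_sub, ← exp_add]; ring_nf
  have hpow : τ ^ (p - 1) * (τ * (1 + u)) ^ (-p) = (1 + u) ^ (-p) / τ := by
    rw [mul_rpow hτ.le (by positivity), rpow_sub_one hτ.ne', rpow_neg hτ.le]
    field_simp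
  have hv := div_one_add_le_one_sub_exp_neg (mul_pos hτ hu).le
  have hE : (1 + u) ^ (-p) / τ * (exp (-τ) * (1 - exp (-(τ * u)))) ≤ expIntegralE p τ := by
    rw [expIntegralE, ← hpow, ← hexp, mul_assoc]
    exact mul_le_mul_of_nonneg_left hI (by positivity)
  calc u * exp (-τ)
      = (1 + u) ^ p * (1 + τ * u) * ((1 + u) ^ (-p) / τ * (exp (-τ) * (τ * u / (1 + τ * u)))) := by
        rw [rpow_neg (by positivity)]
        field_simp
    _ ≤ (1 + u) ^ p * (1 + τ * u) * expIntegralE p τ := by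
        refine mul_le_mul_of_nonneg_left (le_trans ?_ hE) (by positivity)
        gcongr

lemma one_add_rpow_le_two_mul_exp_one {u p : ℝ} (hu0 : 0 ≤ u) (hu1 : u ≤ 1) (hp : 1 ≤ p)
    (hup : u * (p - 1) ≤ 1) : (1 + u) ^ p ≤ 2 * exp 1 := by
  have hbase : (1 + u) ^ (p - 1) ≤ exp 1 :=
    calc (1 + u) ^ (p - 1) ≤ exp u ^ (p - 1) := by
          gcongr
          linarith [add_one_le_exp u]
      _ ≤ exp 1 := by rw [← exp_mul]; exact exp_le_exp.2 hup
  calc (1 + u) ^ p = (1 + u) ^ (p - 1) * (1 + u) := by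
        rw [← rpow_add_one (by positivity), sub_add_cancel]
    _ ≤ exp 1 * 2 := by gcongr; linarith
    _ = 2 * exp 1 := mul_comm _ _

lemma one_le_of_log_add_two_lt {s : ℝ} (hs : 0 < s) (h2 : log s + 2 < s)
    (h6 : 0 < 6 * s + log s) : 1 ≤ s := by
  by_contra! hs1
  have hlog : log s < -1 := by linarith
  have hquarter : 1 / 4 < s := by linarith
  have hlog4 : -(2 * log 2) < log s := by
    have := log_lt_log (by norm_num) hquarter
    rwa [one_div, log_inv, show (4 : ℝ) = 2 ^ 2 by norm_num, log_pow, Nat.cast_ofNat] at this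
  have hs_half : s < 1 / 2 := by
    have he : 2 ≤ exp 1 := by linarith [add_one_le_exp 1]
    calc s < exp (-1) := (log_lt_iff_lt_exp hs).1 hlog
      _ ≤ 1 / 2 := by rw [exp_neg, one_div]; gcongr
  linarith [log_two_lt_d9]

lemma lt_log_of_mul_expIntegralE_eq_one {p τ y : ℝ} (hτ : 0 < τ) (hy : 0 < y)
    (hE : y * expIntegralE p τ = 1) (h2 : 2 < log y + p) : τ < log y := by
  by_contra! hτy
  have hexp : y * exp (-τ) ≤ 1 :=
    calc y * exp (-τ) ≤ y * exp (-log y) := by gcongr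
      _ = 1 := by rw [exp_neg, exp_log hy, mul_inv_cancel₀ hy.ne']
  have : τ + p - 1 ≤ 1 :=
    calc τ + p - 1 = y * ((τ + p - 1) * expIntegralE p τ) := by
          linear_combination (-(τ + p - 1)) * hE
      _ ≤ y * exp (-τ) := by gcongr; exact add_sub_one_mul_expIntegralE_le p hτ
      _ ≤ 1 := hexp
  linarith

lemma log_sub_log_log_sub_ceil_lt {p τ y : ℝ} (hp : 1 < p) (hτ : 0 < τ) (hy : 1 < y)
    (hE : y * expIntegralE p τ = 1) (h6 : 0 < 6 * log y + log (log y)) :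
    log y - log (log y) - ⌈p⌉₊ < τ := by
  have hM2 : (2 : ℝ) ≤ ⌈p⌉₊ := by
    have : 1 < ⌈p⌉₊ := Nat.lt_ceil.2 (by exact_mod_cast hp)
    exact_mod_cast this
  have hpM : p ≤ ⌈p⌉₊ := Nat.le_ceil p
  set s := log y
  set M : ℝ := (⌈p⌉₊ : ℝ)
  have hs : 0 < s := log_pos hy
  by_contra! hτs
  have hs1 : 1 ≤ s := one_le_of_log_add_two_lt hs (by linarith) h6
  have hlower : s * exp M ≤ y * exp (-τ) :=
    calc s * exp M = y * exp (-(s - log s - M)) := by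
          rw [show -(s - log s - M) = -s + log s + M by ring, exp_add, exp_add, exp_neg,
            exp_log hs, exp_log (by linarith)]
          field_simp
      _ ≤ y * exp (-τ) := by gcongr
  -- `u (p - 1) ≤ 1` keeps `(1 + u) ^ p ≤ 2e`, and `1 / u = M - 1` cancels the `- M` in `hτs`.
  have hupper : y * exp (-τ) ≤ 2 * exp 1 * (M - 1 + τ) := by
    have hM1 : 0 < M - 1 := by linarith
    set u := (M - 1)⁻¹
    have hMu : (M - 1) * u = 1 := mul_inv_cancel₀ hM1.ne'
    have hu0 : 0 < u := inv_pos.2 hM1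
    have hu1 : u ≤ 1 := inv_le_one_of_one_le₀ (by linarith)
    have hup : u * (p - 1) ≤ 1 := by nlinarith
    have hu : u * (y * exp (-τ)) ≤ 2 * exp 1 * (1 + τ * u) :=
      calc u * (y * exp (-τ)) = y * (u * exp (-τ)) := by ring
        _ ≤ y * ((1 + u) ^ p * (1 + τ * u) * expIntegralE p τ) :=
            mul_le_mul_of_nonneg_left (mul_exp_neg_le_expIntegralE (by linarith) hτ hu0)
              (by linarith)
        _ = (1 + u) ^ p * (1 + τ * u) := by linear_combination (1 + u) ^ p * (1 + τ * u) * hE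
        _ ≤ 2 * exp 1 * (1 + τ * u) := by
            gcongr; exact one_add_rpow_le_two_mul_exp_one hu0.le hu1 hp.le hup
    calc y * exp (-τ) = (M - 1) * (u * (y * exp (-τ))) := by
          linear_combination (-(y * exp (-τ))) * hMu
      _ ≤ (M - 1) * (2 * exp 1 * (1 + τ * u)) := by gcongr
      _ = 2 * exp 1 * (M - 1 + τ) := by linear_combination 2 * exp 1 * τ * hMu
  have hkey : s * (exp 1 * exp 1) ≤ 2 * exp 1 * (s - 1) :=
    calc s * (exp 1 * exp 1) = s * exp 2 := by rw [← exp_add]; norm_num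
      _ ≤ s * exp M := by gcongr
      _ ≤ 2 * exp 1 * (M - 1 + τ) := hlower.trans hupper
      _ ≤ 2 * exp 1 * (s - 1) := by gcongr; linarith [log_nonneg hs1]
  have he : 2 < exp 1 := by linarith [exp_one_gt_d9]
  nlinarith [mul_pos (mul_pos hs (exp_pos 1)) (sub_pos.2 he), exp_pos 1]

/-- Inversion of the α < 1 gradient-descent scaling law: if
`F(τ) = ((1−α)/α)·τ^{1/α−1}·∫_τ^∞ z^{−1/α}e^{−z}dz = ε`, with `y = (1−α)/(αε)`
large enough, then `log y − log log y − ⌈1/α⌉ < τ < log y`. -/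
theorem stmt19 (α ε : ℝ) (hα0 : 0 < α) (hα1 : α < 1) (hε : 0 < ε)
    (y : ℝ) (hy : y = (1 - α) / (α * ε))
    (hy1 : 1 < y)
    (hy2 : 2 < Real.log y + (⌊1/α⌋₊ : ℝ))
    (hy3 : 1 < y ^ 6 * Real.log y) :
    ∀ τ : ℝ, 0 < τ →
      ((1 - α) / α) * τ ^ (1/α - 1) *
          (∫ z in Set.Ioi τ, z ^ (-(1/α)) * Real.exp (-z)) = ε →
      Real.log y - Real.log (Real.log y) - (⌈1/α⌉₊ : ℝ) < τ ∧ τ < Real.log y := by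
  intro τ hτ hF
  have hp : 1 < 1 / α := by rw [lt_div_iff₀ hα0]; linarith
  have hE : y * expIntegralE (1 / α) τ = 1 :=
    calc y * expIntegralE (1 / α) τ
        = (1 - α) / α * τ ^ (1 / α - 1) * (∫ z in Ioi τ, z ^ (-(1 / α)) * exp (-z)) / ε := by
          rw [hy, expIntegralE]; field_simp
      _ = 1 := by rw [hF, div_self hε.ne']
  have h6 : 0 < 6 * log y + log (log y) := by
    have := log_pos hy3
    rwa [log_mul (by positivity) (log_pos hy1).ne', log_pow, Nat.cast_ofNat] at this
  have hfloor : (⌊1 / α⌋₊ : ℝ) ≤ 1 / α := Nat.floor_le (by positivity)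
  exact ⟨log_sub_log_log_sub_ceil_lt hp hτ hy1 hE h6,
    lt_log_of_mul_expIntegralE_eq_one hτ (by linarith) hE (by linarith)⟩
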